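/- Let U be a Ptolemy diagram of the ∞-gon P_∞ and D ⊆ I(U) a subset which is locally finite or has a fountain. Then the D-mutation μ_D(U) of U is again a Ptolemy diagram of P_∞. -/

import Mathlib

/-!
The arcs of `D` cut the ∞-gon into cells, and the vertices of a cell `C` carry a cyclic rotation
`nxt C`. Inside a cell, the mutation pulls the arcs of `U` back along this rotation, which
preserves crossings and sides of quadrilaterals. Since a cell lies on one side of every arc of
`D`, two crossing arcs of the mutation come from one and the same cell (two cells sharing three
vertices coincide), so the Ptolemy condition for the mutation is the rotated Ptolemy condition
for `U`.

For the fountain condition, a right fountain `n` of the mutation is either the fountain of `D`,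
or, by pigeonhole, infinitely many of its arcs come from cells in which `n` is followed by the
same vertex `c`. Then `c` is a right, hence a left, fountain of `U`, and each arc `(m, c)` of `U`
gives the arc `(prv m, n)` of the mutation in the cell of `D` containing `(m, c)`. Local
finiteness or the fountain of `D` is what makes this cell finite or infinite in both directions.
-/

namespace InfinityGonPtolemy

/-- `{a,b}` (with `a < b`) is an arc of the ∞-gon. -/
def IsArc (a b : ℤ) : Prop := a + 2 ≤ b

/-- `{a,b}` (with `a < b`) is an edge of the ∞-gon. -/
def IsEdge (a b : ℤ) : Prop := b = a + 1

/-- Two arcs, given as ordered pairs, cross each other. -/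
def Cross (p q : ℤ × ℤ) : Prop :=
  (p.1 < q.1 ∧ q.1 < p.2 ∧ p.2 < q.2) ∨ (q.1 < p.1 ∧ p.1 < q.2 ∧ q.2 < p.2)

/-- `n` is a left fountain of `A`. -/
def IsLeftFountain (A : Set (ℤ × ℤ)) (n : ℤ) : Prop :=
  {m : ℤ | (m, n) ∈ A}.Infinite

/-- `n` is a right fountain of `A`. -/
def IsRightFountain (A : Set (ℤ × ℤ)) (n : ℤ) : Prop :=
  {p : ℤ | (n, p) ∈ A}.Infinite

/-- `A` has a fountain. -/
def HasFountain (A : Set (ℤ × ℤ)) : Prop :=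
  ∃ n : ℤ, IsLeftFountain A n ∧ IsRightFountain A n

/-- `A` is locally finite: only finitely many arcs of `A` end in any given integer. -/
def LocallyFinite (A : Set (ℤ × ℤ)) : Prop :=
  ∀ n : ℤ, {m : ℤ | (m, n) ∈ A ∨ (n, m) ∈ A}.Finite

/-- `U` is a Ptolemy diagram of the ∞-gon: (i) whenever two arcs `{a,c}` and `{b,d}` of
`U` cross, those of `{a,b}`, `{b,c}`, `{c,d}`, `{a,d}` which are arcs belong to `U`;
(ii) every right fountain of `U` is a fountain. -/
def IsPtolemy (U : Set (ℤ × ℤ)) : Prop :=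
  (∀ p ∈ U, IsArc p.1 p.2) ∧
  (∀ a b c d : ℤ, (a, c) ∈ U → (b, d) ∈ U → a < b → b < c → c < d →
    (IsArc a b → (a, b) ∈ U) ∧ (IsArc b c → (b, c) ∈ U) ∧
    (IsArc c d → (c, d) ∈ U) ∧ (IsArc a d → (a, d) ∈ U)) ∧
  (∀ n : ℤ, IsRightFountain U n → IsLeftFountain U n)

/-- `I(U)`: the arcs of `U` crossing no arc of `U`. -/
def core (U : Set (ℤ × ℤ)) : Set (ℤ × ℤ) :=
  {p | p ∈ U ∧ ∀ q ∈ U, ¬ Cross p q}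

/-- `{a,b}` (with `a < b`, both in `S`) is a boundary pair of the finite cell `S`:
either `a` and `b` are consecutive in `S`, or `a = min S` and `b = max S`. -/
def CellBoundaryPair (S : Finset ℤ) (a b : ℤ) : Prop :=
  a ∈ S ∧ b ∈ S ∧ a < b ∧
    ((∀ c ∈ S, ¬(a < c ∧ c < b)) ∨ (∀ c ∈ S, a ≤ c ∧ c ≤ b))

/-- `S` is a finite `D`-cell. -/
def IsFiniteCell (D : Set (ℤ × ℤ)) (S : Finset ℤ) : Prop :=
  S.Nonempty ∧
  (∀ a b : ℤ, CellBoundaryPair S a b → (IsEdge a b ∨ (a, b) ∈ D)) ∧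
  (∀ a ∈ S, ∀ b ∈ S, a < b → ¬ CellBoundaryPair S a b → (a, b) ∉ D)

/-- `{a,b}` lies in the interior of the finite cell `S`. -/
def FiniteInterior (S : Finset ℤ) (a b : ℤ) : Prop :=
  a ∈ S ∧ b ∈ S ∧ a < b ∧ ¬ CellBoundaryPair S a b

/-- The strictly increasing enumeration `f` is an infinite `D`-cell: consecutive pairs
are edges or elements of `D`, and no other pair of its vertices belongs to `D`. -/
def IsInfiniteCell (D : Set (ℤ × ℤ)) (f : ℤ → ℤ) : Prop :=
  StrictMono f ∧
  (∀ t : ℤ, IsEdge (f t) (f (t + 1)) ∨ (f t, f (t + 1)) ∈ D) ∧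
  (∀ k l : ℤ, k + 2 ≤ l → (f k, f l) ∉ D)

/-- `{a,b}` lies in the interior of the infinite cell `f`. -/
def InfiniteInterior (f : ℤ → ℤ) (a b : ℤ) : Prop :=
  ∃ k l : ℤ, k + 2 ≤ l ∧ a = f k ∧ b = f l

/-- The cyclic predecessor of `x` in the finite cell `S`: the largest element of `S`
below `x`, or `max S` if `x = min S`. -/
noncomputable def cellPred (S : Finset ℤ) (x : ℤ) : ℤ :=
  if h : (S.filter (fun c => c < x)).Nonempty then (S.filter (fun c => c < x)).max' h
  else if h2 : S.Nonempty then S.max' h2 else 0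

/-- The ordered pair `{x,y}`. -/
def ordPair (x y : ℤ) : ℤ × ℤ := (min x y, max x y)

/-- The `D`-mutation of `U`: keep the arcs of `D`, replace every arc of `U` in the
interior of a finite `D`-cell by the arc on the cyclic predecessors of its endpoints,
and every arc `{f k, f l}` of `U` in the interior of an infinite `D`-cell `f` by
`{f (k-1), f (l-1)}`. -/
def mutation (U D : Set (ℤ × ℤ)) : Set (ℤ × ℤ) :=
  D ∪ {p | ∃ S : Finset ℤ, IsFiniteCell D S ∧ ∃ a b : ℤ, (a, b) ∈ U ∧
        FiniteInterior S a b ∧ p = ordPair (cellPred S a) (cellPred S b)}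
    ∪ {p | ∃ f : ℤ → ℤ, IsInfiniteCell D f ∧ ∃ k l : ℤ, k + 2 ≤ l ∧ (f k, f l) ∈ U ∧
        p = (f (k - 1), f (l - 1))}

/-! ### Cyclic rotation of a vertex set -/

lemma ordPair_comm (x y : ℤ) : ordPair x y = ordPair y x := by
  simp only [ordPair, min_comm, max_comm]

lemma ordPair_of_le {x y : ℤ} (h : x ≤ y) : ordPair x y = (x, y) := by
  simp only [ordPair, min_eq_left h, max_eq_right h]

lemma ordPair_apply_ordPair (g : ℤ → ℤ) (x y : ℤ) :
    ordPair (g (ordPair x y).1) (g (ordPair x y).2) = ordPair (g x) (g y) := by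
  rcases le_total x y with h | h
  · rw [ordPair_of_le h]
  · rw [ordPair_comm x y, ordPair_of_le h, ordPair_comm]

lemma isLeast_csInf_int {s : Set ℤ} (hne : s.Nonempty) (hb : BddBelow s) :
    IsLeast s (sInf s) :=
  ⟨Int.csInf_mem hne hb, fun _ h => csInf_le hb h⟩

lemma isGreatest_csSup_int {s : Set ℤ} (hne : s.Nonempty) (hb : BddAbove s) :
    IsGreatest s (sSup s) :=
  ⟨Int.csSup_mem hne hb, fun _ h => le_csSup hb h⟩

/-- On the vertex set `C` of a cell, `nxt C` and `prv C` are the two cyclic rotations: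
`nxt C v` is the least vertex above `v`, wrapping around to `min C` at `max C`. -/
noncomputable def nxt (C : Set ℤ) (v : ℤ) : ℤ :=
  open Classical in if ∃ w ∈ C, v < w then sInf {w | w ∈ C ∧ v < w} else sInf C

noncomputable def prv (C : Set ℤ) (v : ℤ) : ℤ :=
  open Classical in if ∃ w ∈ C, w < v then sSup {w | w ∈ C ∧ w < v} else sSup C

section Rotation

variable {C : Set ℤ} {v x y : ℤ}

lemma isLeast_nxt (h : ∃ w ∈ C, v < w) : IsLeast {w | w ∈ C ∧ v < w} (nxt C v) := by
  rw [nxt, if_pos h]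
  obtain ⟨w, hw⟩ := h
  exact isLeast_csInf_int ⟨w, hw⟩ ⟨v, fun _ hu => hu.2.le⟩

lemma isGreatest_prv (h : ∃ w ∈ C, w < v) : IsGreatest {w | w ∈ C ∧ w < v} (prv C v) := by
  rw [prv, if_pos h]
  obtain ⟨w, hw⟩ := h
  exact isGreatest_csSup_int ⟨w, hw⟩ ⟨v, fun _ hu => hu.2.le⟩

lemma nxt_of_isGreatest (hv : IsGreatest C v) {m : ℤ} (hm : IsLeast C m) : nxt C v = m := by
  rw [nxt, if_neg (fun ⟨w, hw, hvw⟩ => (hv.2 hw).not_gt hvw)]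
  exact (isLeast_csInf_int ⟨m, hm.1⟩ ⟨m, hm.2⟩).unique hm

lemma prv_of_isLeast (hv : IsLeast C v) {M : ℤ} (hM : IsGreatest C M) : prv C v = M := by
  rw [prv, if_neg (fun ⟨w, hw, hwv⟩ => (hv.2 hw).not_gt hwv)]
  exact (isGreatest_csSup_int ⟨M, hM.1⟩ ⟨M, hM.2⟩).unique hM

variable (hC : BddAbove C ↔ BddBelow C)
include hC

lemma exists_isLeast_of_isGreatest (hv : IsGreatest C v) : ∃ m, IsLeast C m :=
  ⟨_, isLeast_csInf_int ⟨v, hv.1⟩ (hC.mp ⟨v, hv.2⟩)⟩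

lemma exists_isGreatest_of_isLeast (hv : IsLeast C v) : ∃ M, IsGreatest C M :=
  ⟨_, isGreatest_csSup_int ⟨v, hv.1⟩ (hC.mpr ⟨v, hv.2⟩)⟩

lemma nxt_mem (hv : v ∈ C) : nxt C v ∈ C := by
  by_cases h : ∃ w ∈ C, v < w
  · exact (isLeast_nxt h).1.1
  · push Not at h
    obtain ⟨m, hm⟩ := exists_isLeast_of_isGreatest hC ⟨hv, h⟩
    rw [nxt_of_isGreatest ⟨hv, h⟩ hm]
    exact hm.1

lemma prv_mem (hv : v ∈ C) : prv C v ∈ C := by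
  by_cases h : ∃ w ∈ C, w < v
  · exact (isGreatest_prv h).1.1
  · push Not at h
    obtain ⟨M, hM⟩ := exists_isGreatest_of_isLeast hC ⟨hv, h⟩
    rw [prv_of_isLeast ⟨hv, h⟩ hM]
    exact hM.1

lemma prv_nxt (hv : v ∈ C) : prv C (nxt C v) = v := by
  by_cases h : ∃ w ∈ C, v < w
  · obtain ⟨⟨hc, hvc⟩, hcmin⟩ := isLeast_nxt h
    refine ((isGreatest_prv ⟨v, hv, hvc⟩).unique ⟨⟨hv, hvc⟩, fun u ⟨hu, huc⟩ => ?_⟩)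
    by_contra! hvu
    exact (hcmin ⟨hu, hvu⟩).not_gt huc
  · push Not at h
    obtain ⟨m, hm⟩ := exists_isLeast_of_isGreatest hC ⟨hv, h⟩
    rw [nxt_of_isGreatest ⟨hv, h⟩ hm, prv_of_isLeast hm ⟨hv, h⟩]

lemma nxt_prv (hv : v ∈ C) : nxt C (prv C v) = v := by
  by_cases h : ∃ w ∈ C, w < v
  · obtain ⟨⟨hc, hcv⟩, hcmax⟩ := isGreatest_prv h
    refine ((isLeast_nxt ⟨v, hv, hcv⟩).unique ⟨⟨hv, hcv⟩, fun u ⟨hu, hcu⟩ => ?_⟩)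
    by_contra! huv
    exact (hcmax ⟨hu, huv⟩).not_gt hcu
  · push Not at h
    obtain ⟨M, hM⟩ := exists_isGreatest_of_isLeast hC ⟨hv, h⟩
    rw [prv_of_isLeast ⟨hv, h⟩ hM, nxt_of_isGreatest hM ⟨hv, h⟩]

end Rotation

/-- `{x, y}` (with `x < y`) is a diagonal of the polygon with vertex set `C`. -/
def IsInteriorPair (C : Set ℤ) (x y : ℤ) : Prop :=
  x ∈ C ∧ y ∈ C ∧ (∃ u ∈ C, x < u ∧ u < y) ∧ ∃ w ∈ C, w < x ∨ y < w

/-- The rotation-invariant form of `IsInteriorPair`, for unordered pairs. -/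
def IsDiagonal (C : Set ℤ) (x y : ℤ) : Prop :=
  x ∈ C ∧ y ∈ C ∧ x ≠ y ∧ nxt C x ≠ y ∧ nxt C y ≠ x

lemma IsInteriorPair.lt {C : Set ℤ} {x y : ℤ} (h : IsInteriorPair C x y) : x < y := by
  obtain ⟨-, -, ⟨u, -, hxu, huy⟩, -⟩ := h
  exact hxu.trans huy

lemma IsInteriorPair.isArc {C : Set ℤ} {x y : ℤ} (h : IsInteriorPair C x y) : IsArc x y := by
  obtain ⟨-, -, ⟨u, -, hxu, huy⟩, -⟩ := h
  unfold IsArc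
  omega

lemma IsDiagonal.symm {C : Set ℤ} {x y : ℤ} (h : IsDiagonal C x y) : IsDiagonal C y x :=
  ⟨h.2.1, h.1, h.2.2.1.symm, h.2.2.2.2, h.2.2.2.1⟩

section Diagonal

variable {C : Set ℤ} {x y : ℤ} (hC : BddAbove C ↔ BddBelow C)
include hC

lemma isInteriorPair_iff_isDiagonal (hxy : x < y) : IsInteriorPair C x y ↔ IsDiagonal C x y := by
  refine ⟨fun ⟨hx, hy, hbetween, hout⟩ => ⟨hx, hy, hxy.ne, ?_, ?_⟩,
    fun ⟨hx, hy, _, hnx, hny⟩ => ⟨hx, hy, ?_, ?_⟩⟩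
  · obtain ⟨u, hu, hxu, huy⟩ := hbetween
    exact (((isLeast_nxt ⟨y, hy, hxy⟩).2 ⟨hu, hxu⟩).trans_lt huy).ne
  · by_cases habove : ∃ w ∈ C, y < w
    · exact ((isLeast_nxt habove).1.2.trans' hxy).ne'
    · push Not at habove
      obtain ⟨m, hm⟩ := exists_isLeast_of_isGreatest hC ⟨hy, habove⟩
      rw [nxt_of_isGreatest ⟨hy, habove⟩ hm]
      obtain ⟨w, hw, hwx | hyw⟩ := hout
      · exact ((hm.2 hw).trans_lt hwx).ne
      · exact absurd (habove w hw) hyw.not_ge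
  · obtain ⟨⟨hc, hxc⟩, hcy⟩ := isLeast_nxt ⟨y, hy, hxy⟩
    exact ⟨nxt C x, hc, hxc, lt_of_le_of_ne (hcy ⟨hy, hxy⟩) hnx⟩
  · by_contra! hin
    refine hny (nxt_of_isGreatest ⟨hy, fun w hw => ?_⟩ ⟨hx, fun w hw => (hin w hw).1⟩)
    exact (hin w hw).2

lemma IsDiagonal.map_nxt (h : IsDiagonal C x y) : IsDiagonal C (nxt C x) (nxt C y) := by
  obtain ⟨hx, hy, hxy, hnx, hny⟩ := h
  have hinj : ∀ {a b}, a ∈ C → b ∈ C → nxt C a = nxt C b → a = b := fun ha hb h => by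
    rw [← prv_nxt hC ha, ← prv_nxt hC hb, h]
  exact ⟨nxt_mem hC hx, nxt_mem hC hy, fun h => hxy (hinj hx hy h),
    fun h => hnx (hinj (nxt_mem hC hx) hy h), fun h => hny (hinj (nxt_mem hC hy) hx h)⟩

lemma IsDiagonal.map_prv (h : IsDiagonal C x y) : IsDiagonal C (prv C x) (prv C y) := by
  obtain ⟨hx, hy, hxy, hnx, hny⟩ := h
  refine ⟨prv_mem hC hx, prv_mem hC hy, fun h => hxy ?_, ?_, ?_⟩
  · rw [← nxt_prv hC hx, ← nxt_prv hC hy, h]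
  · rw [nxt_prv hC hx]
    rintro rfl
    exact hnx (nxt_prv hC hy)
  · rw [nxt_prv hC hy]
    rintro rfl
    exact hny (nxt_prv hC hx)

lemma IsDiagonal.isInteriorPair_ordPair (h : IsDiagonal C x y) :
    IsInteriorPair C (ordPair x y).1 (ordPair x y).2 := by
  rcases h.2.2.1.lt_or_gt with hxy | hyx
  · rw [ordPair_of_le hxy.le]
    exact (isInteriorPair_iff_isDiagonal hC hxy).mpr h
  · rw [ordPair_comm, ordPair_of_le hyx.le]
    exact (isInteriorPair_iff_isDiagonal hC hyx).mpr h.symm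

lemma IsInteriorPair.ordPair_nxt (h : IsInteriorPair C x y) :
    IsInteriorPair C (ordPair (nxt C x) (nxt C y)).1 (ordPair (nxt C x) (nxt C y)).2 :=
  (((isInteriorPair_iff_isDiagonal hC h.lt).mp h).map_nxt hC).isInteriorPair_ordPair hC

lemma IsInteriorPair.ordPair_prv (h : IsInteriorPair C x y) :
    IsInteriorPair C (ordPair (prv C x) (prv C y)).1 (ordPair (prv C x) (prv C y)).2 :=
  (((isInteriorPair_iff_isDiagonal hC h.lt).mp h).map_prv hC).isInteriorPair_ordPair hC

end Diagonal

/-! ### Cells -/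

def NonCrossing (D : Set (ℤ × ℤ)) : Prop :=
  ∀ p ∈ D, ∀ q ∈ D, ¬ Cross p q

lemma nonCrossing_of_subset_core {U D : Set (ℤ × ℤ)} (hD : D ⊆ core U) : NonCrossing D :=
  fun _ hp _ hq => (hD hp).2 _ (hD hq).1

/-- A `D`-cell given by its vertex set; see `isCell_iff`. -/
structure IsCellSet (D : Set (ℤ × ℤ)) (C : Set ℤ) : Prop where
  side : ∀ x ∈ C, ∀ y ∈ C, x < y → ¬ IsInteriorPair C x y → IsEdge x y ∨ (x, y) ∈ D
  diagonal : ∀ x y, IsInteriorPair C x y → (x, y) ∉ D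
  bddAbove_iff : BddAbove C ↔ BddBelow C

namespace IsCellSet

variable {D : Set (ℤ × ℤ)} {C S T : Set ℤ} {x y z : ℤ}

lemma mem_of_isLeast_of_isGreatest (hC : IsCellSet D C) {m M : ℤ} (hm : IsLeast C m)
    (hM : IsGreatest C M) (hmM : m + 2 ≤ M) : (m, M) ∈ D := by
  have hside := hC.side m hm.1 M hM.1 (by omega)
    fun ⟨_, _, _, w, hw, hout⟩ => by have := hm.2 hw; have := hM.2 hw; omega
  unfold IsEdge at hside
  exact hside.resolve_left (by omega)

lemma exists_hull (hC : IsCellSet D C) (hbdd : BddAbove C ∨ BddBelow C) (hx : x ∈ C)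
    (hy : y ∈ C) (hxy : x + 2 ≤ y) : ∃ m M, IsLeast C m ∧ IsGreatest C M ∧ (m, M) ∈ D := by
  have hab : BddAbove C ∧ BddBelow C := by
    rcases hbdd with h | h
    · exact ⟨h, hC.bddAbove_iff.mp h⟩
    · exact ⟨hC.bddAbove_iff.mpr h, h⟩
  have hm := isLeast_csInf_int ⟨x, hx⟩ hab.2
  have hM := isGreatest_csSup_int ⟨x, hx⟩ hab.1
  have := hm.2 hx
  have := hM.2 hy
  exact ⟨_, _, hm, hM, hC.mem_of_isLeast_of_isGreatest hm hM (by omega)⟩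

/-- A vertex `z` outside a (non-degenerate) cell is cut off from it by an arc `(g, g')` of `D`:
either `z` lies under `(g, g')` and the cell does not, or the other way round. -/
lemma exists_separating (hC : IsCellSet D C) (hx : x ∈ C) (hy : y ∈ C) (hxy : x + 2 ≤ y)
    (hz : z ∉ C) :
    ∃ g g', (g, g') ∈ D ∧ ((g < z ∧ z < g' ∧ ∀ u ∈ C, u ≤ g ∨ g' ≤ u) ∨
      ((z < g ∨ g' < z) ∧ ∀ u ∈ C, g ≤ u ∧ u ≤ g')) := by
  by_cases hbelow : ∃ a ∈ C, a < z
  · by_cases habove : ∃ b ∈ C, z < b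
    · obtain ⟨⟨hg, hgz⟩, hgmax⟩ := isGreatest_prv hbelow
      obtain ⟨⟨hg', hzg'⟩, hg'min⟩ := isLeast_nxt habove
      have hsplit : ∀ u ∈ C, u ≤ prv C z ∨ nxt C z ≤ u := fun u hu => by
        rcases lt_trichotomy u z with h | rfl | h
        · exact .inl (hgmax ⟨hu, h⟩)
        · exact absurd hu hz
        · exact .inr (hg'min ⟨hu, h⟩)
      have hside := hC.side _ hg _ hg' (hgz.trans hzg')
        fun ⟨_, _, ⟨u, hu, h1, h2⟩, _⟩ => by have := hsplit u hu; omega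
      unfold IsEdge at hside
      exact ⟨_, _, hside.resolve_left (by omega), .inl ⟨hgz, hzg', hsplit⟩⟩
    · push Not at habove
      obtain ⟨m, M, hm, hM, hmM⟩ := hC.exists_hull (.inl ⟨z, habove⟩) hx hy hxy
      have hMz : M ≠ z := fun h => hz (h ▸ hM.1)
      have := habove M hM.1
      exact ⟨m, M, hmM, .inr ⟨by omega, fun u hu => ⟨hm.2 hu, hM.2 hu⟩⟩⟩
  · push Not at hbelow
    obtain ⟨m, M, hm, hM, hmM⟩ := hC.exists_hull (.inr ⟨z, hbelow⟩) hx hy hxy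
    have hmz : m ≠ z := fun h => hz (h ▸ hm.1)
    have := hbelow m hm.1
    exact ⟨m, M, hmM, .inr ⟨by omega, fun u hu => ⟨hm.2 hu, hM.2 hu⟩⟩⟩

lemma subset_Icc (hD : NonCrossing D) (hC : IsCellSet D C) {s t u v : ℤ} (hst : (s, t) ∈ D)
    (hu : u ∈ C) (hsu : s < u) (hut : u < t) (hv : v ∈ C) : s ≤ v ∧ v ≤ t := by
  by_contra hout
  have hcut : ∀ z ∉ C, z = s ∨ z = t → False := by
    intro z hz hzst
    obtain ⟨g, g', hg, hsep⟩ := if hvs : v < s then hC.exists_separating hv hu (by omega) hz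
      else hC.exists_separating hu hv (by omega) hz
    have hcross := hD _ hst _ hg
    simp only [Cross] at hcross
    rcases hsep with ⟨hgz, hzg', hgap⟩ | ⟨hzout, hhull⟩
    · have := hgap u hu
      have := hgap v hv
      omega
    · have := hhull u hu
      have := hhull v hv
      omega
  have hs : s ∈ C := by_contra fun hs => hcut s hs (.inl rfl)
  have ht : t ∈ C := by_contra fun ht => hcut t ht (.inr rfl)
  exact hC.diagonal s t ⟨hs, ht, ⟨u, hu, hsu, hut⟩, v, hv, by omega⟩ hst

lemma mem_of_mem_Ioo (hD : NonCrossing D) (hS : IsCellSet D S) (hT : IsCellSet D T)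
    (hx : x ∈ S) (hy : y ∈ S) (hxz : x < z) (hzy : z < y) (hzT : z ∈ T) {w : ℤ} (hwT : w ∈ T)
    (hw : w < x ∨ y < w) : z ∈ S := by
  by_contra hz
  obtain ⟨g, g', hg, ⟨hgz, hzg', hgap⟩ | ⟨hout, hhull⟩⟩ := hS.exists_separating hx hy (by omega) hz
  · have := hT.subset_Icc hD hg hzT hgz hzg' hwT
    have := hgap x hx
    have := hgap y hy
    omega
  · have := hhull x hx
    have := hhull y hy
    omega

lemma mem_of_lt_of_lt (hD : NonCrossing D) (hS : IsCellSet D S) (hT : IsCellSet D T)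
    (hx : x ∈ S) (hy : y ∈ S) {p : ℤ} (hxp : x < p) (hpy : p < y) (hpT : p ∈ T) (hzT : z ∈ T)
    (hz : z < x ∨ y < z) : z ∈ S := by
  by_contra hzS
  obtain ⟨g, g', hg, ⟨hgz, hzg', hgap⟩ | ⟨hout, hhull⟩⟩ :=
    hS.exists_separating hx hy (by omega) hzS
  · have := hT.subset_Icc hD hg hzT hgz hzg' hpT
    have := hgap x hx
    have := hgap y hy
    omega
  · have := hhull x hx
    have := hhull y hy
    have := hT.subset_Icc hD hg hpT (by omega) (by omega) hzT
    omega

lemma subset_of_three (hD : NonCrossing D) (hS : IsCellSet D S) (hT : IsCellSet D T)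
    {v₁ v₂ v₃ : ℤ} (h₁₂ : v₁ < v₂) (h₂₃ : v₂ < v₃) (h₁ : v₁ ∈ S ∧ v₁ ∈ T) (h₂ : v₂ ∈ S ∧ v₂ ∈ T)
    (h₃ : v₃ ∈ S ∧ v₃ ∈ T) : S ⊆ T := by
  intro x hx
  rcases lt_trichotomy x v₁ with h | rfl | h
  · exact hT.mem_of_lt_of_lt hD hS h₁.2 h₃.2 h₁₂ h₂₃ h₂.1 hx (.inl h)
  · exact h₁.2
  rcases lt_trichotomy x v₂ with h' | rfl | h'
  · exact hT.mem_of_mem_Ioo hD hS h₁.2 h₂.2 h h' hx h₃.1 (.inr h₂₃)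
  · exact h₂.2
  rcases lt_trichotomy x v₃ with h'' | rfl | h''
  · exact hT.mem_of_mem_Ioo hD hS h₂.2 h₃.2 h' h'' hx h₁.1 (.inl h₁₂)
  · exact h₃.2
  · exact hT.mem_of_lt_of_lt hD hS h₁.2 h₃.2 h₁₂ h₂₃ h₂.1 hx (.inr h'')

lemma eq_of_three (hD : NonCrossing D) (hS : IsCellSet D S) (hT : IsCellSet D T)
    {v₁ v₂ v₃ : ℤ} (h₁₂ : v₁ < v₂) (h₂₃ : v₂ < v₃) (h₁ : v₁ ∈ S ∧ v₁ ∈ T) (h₂ : v₂ ∈ S ∧ v₂ ∈ T)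
    (h₃ : v₃ ∈ S ∧ v₃ ∈ T) : S = T :=
  (hS.subset_of_three hD hT h₁₂ h₂₃ h₁ h₂ h₃).antisymm
    (hT.subset_of_three hD hS h₁₂ h₂₃ h₁.symm h₂.symm h₃.symm)

end IsCellSet

lemma finiteInterior_iff {S : Finset ℤ} {a b : ℤ} :
    FiniteInterior S a b ↔ IsInteriorPair (S : Set ℤ) a b := by
  constructor
  · rintro ⟨ha, hb, hab, hnb⟩
    have : ¬ ((∀ c ∈ S, ¬(a < c ∧ c < b)) ∨ ∀ c ∈ S, a ≤ c ∧ c ≤ b) := fun h => hnb ⟨ha, hb, hab, h⟩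
    push Not at this
    obtain ⟨⟨u, hu, hau, hub⟩, w, hw, hout⟩ := this
    exact ⟨ha, hb, ⟨u, hu, hau, hub⟩, w, hw, by omega⟩
  · rintro ⟨ha, hb, ⟨u, hu, hau, hub⟩, w, hw, hout⟩
    refine ⟨ha, hb, hau.trans hub, fun ⟨_, _, _, h⟩ => h.elim (fun h => h u hu ⟨hau, hub⟩) ?_⟩
    intro h
    have := h w hw
    omega

lemma cellBoundaryPair_iff {S : Finset ℤ} {a b : ℤ} :
    CellBoundaryPair S a b ↔ a ∈ S ∧ b ∈ S ∧ a < b ∧ ¬ IsInteriorPair (S : Set ℤ) a b := by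
  rw [← finiteInterior_iff]
  exact ⟨fun h => ⟨h.1, h.2.1, h.2.2.1, fun h' => h'.2.2.2 h⟩,
    fun ⟨ha, hb, hab, h⟩ => by_contra fun h' => h ⟨ha, hb, hab, h'⟩⟩

lemma cellPred_eq_prv {S : Finset ℤ} (hne : S.Nonempty) (x : ℤ) :
    cellPred S x = prv (S : Set ℤ) x := by
  by_cases h : ∃ w ∈ (S : Set ℤ), w < x
  · obtain ⟨w, hw, hwx⟩ := h
    have hf : (S.filter (· < x)).Nonempty := ⟨w, Finset.mem_filter.mpr ⟨hw, hwx⟩⟩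
    rw [cellPred, dif_pos hf]
    refine ((isGreatest_prv ⟨w, hw, hwx⟩).unique ⟨?_, fun u hu => ?_⟩).symm
    · exact Finset.mem_filter.mp (Finset.max'_mem _ hf)
    · exact Finset.le_max' _ _ (Finset.mem_filter.mpr ⟨hu.1, hu.2⟩)
  · have hf : ¬ (S.filter (· < x)).Nonempty := fun ⟨w, hw⟩ =>
      h ⟨w, (Finset.mem_filter.mp hw).1, (Finset.mem_filter.mp hw).2⟩
    rw [cellPred, dif_neg hf, dif_pos hne, prv, if_neg h, hne.csSup_eq_max']

lemma IsFiniteCell.isCellSet {D : Set (ℤ × ℤ)} {S : Finset ℤ} (h : IsFiniteCell D S) :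
    IsCellSet D S where
  side x hx y hy hxy hint := h.2.1 x y (cellBoundaryPair_iff.mpr ⟨hx, hy, hxy, hint⟩)
  diagonal x y hint := by
    obtain ⟨hx, hy, hxy, hnb⟩ := (finiteInterior_iff (S := S)).mpr hint
    exact h.2.2 x hx y hy hxy hnb
  bddAbove_iff := iff_of_true S.bddAbove S.bddBelow

lemma isFiniteCell_of_isCellSet {D : Set (ℤ × ℤ)} {S : Finset ℤ} (h : IsCellSet D S)
    (hne : S.Nonempty) : IsFiniteCell D S := by
  refine ⟨hne, fun a b hab => ?_, fun a ha b hb hab hnb => ?_⟩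
  · obtain ⟨ha, hb, hab, hint⟩ := cellBoundaryPair_iff.mp hab
    exact h.side a ha b hb hab hint
  · exact h.diagonal a b (finiteInterior_iff.mp ⟨ha, hb, hab, hnb⟩)

lemma nxt_range {f : ℤ → ℤ} (hf : StrictMono f) (k : ℤ) : nxt (Set.range f) (f k) = f (k + 1) := by
  have hk : f (k + 1) ∈ {w | w ∈ Set.range f ∧ f k < w} := ⟨⟨_, rfl⟩, hf (lt_add_one k)⟩
  refine (isLeast_nxt ⟨_, hk⟩).unique ⟨hk, ?_⟩
  rintro _ ⟨⟨j, rfl⟩, hj⟩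
  exact hf.monotone (Int.add_one_le_iff.mpr (hf.lt_iff_lt.mp hj))

lemma isInteriorPair_range_iff {f : ℤ → ℤ} (hf : StrictMono f) {k l : ℤ} :
    IsInteriorPair (Set.range f) (f k) (f l) ↔ k + 2 ≤ l := by
  constructor
  · rintro ⟨-, -, ⟨_, ⟨j, rfl⟩, hkj, hjl⟩, -⟩
    have := hf.lt_iff_lt.mp hkj
    have := hf.lt_iff_lt.mp hjl
    omega
  · intro hkl
    exact ⟨⟨k, rfl⟩, ⟨l, rfl⟩, ⟨f (k + 1), ⟨_, rfl⟩, hf (by omega), hf (by omega)⟩,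
      f (k - 1), ⟨_, rfl⟩, .inl (hf (by omega))⟩

lemma IsInfiniteCell.isCellSet {D : Set (ℤ × ℤ)} {f : ℤ → ℤ} (h : IsInfiniteCell D f) :
    IsCellSet D (Set.range f) where
  side := by
    rintro _ ⟨k, rfl⟩ _ ⟨l, rfl⟩ hkl hint
    rw [isInteriorPair_range_iff h.1] at hint
    obtain rfl : l = k + 1 := by have := h.1.lt_iff_lt.mp hkl; omega
    exact h.2.1 k
  diagonal := by
    rintro _ _ hint
    obtain ⟨k, rfl⟩ := hint.1
    obtain ⟨l, rfl⟩ := hint.2.1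
    exact h.2.2 k l ((isInteriorPair_range_iff h.1).mp hint)
  bddAbove_iff := iff_of_false h.1.not_bddAbove_range_of_isSuccArchimedean
    h.1.not_bddBelow_range_of_isPredArchimedean

lemma isInfiniteCell_of_isCellSet {D : Set (ℤ × ℤ)} {f : ℤ → ℤ} (hf : StrictMono f)
    (h : IsCellSet D (Set.range f)) : IsInfiniteCell D f := by
  refine ⟨hf, fun t => ?_, fun k l hkl => ?_⟩
  · refine h.side _ ⟨t, rfl⟩ _ ⟨t + 1, rfl⟩ (hf (lt_add_one t)) ?_
    rw [isInteriorPair_range_iff hf]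
    omega
  · exact h.diagonal _ _ ((isInteriorPair_range_iff hf).mpr hkl)

lemma exists_strictMono_range_eq {C : Set ℤ} (hne : C.Nonempty) (hbelow : ¬ BddBelow C)
    (habove : ¬ BddAbove C) : ∃ f : ℤ → ℤ, StrictMono f ∧ Set.range f = C := by
  classical
  have : NoMaxOrder C := ⟨fun ⟨x, _⟩ => by
    obtain ⟨y, hy, hxy⟩ := not_bddAbove_iff.mp habove x
    exact ⟨⟨y, hy⟩, hxy⟩⟩
  have : NoMinOrder C := ⟨fun ⟨x, _⟩ => by
    obtain ⟨y, hy, hxy⟩ := not_bddBelow_iff.mp hbelow x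
    exact ⟨⟨y, hy⟩, hxy⟩⟩
  have : Nonempty C := hne.to_subtype
  let := LinearLocallyFiniteOrder.succOrder C
  let := LinearLocallyFiniteOrder.predOrder C
  let e : C ≃o ℤ := orderIsoIntOfLinearSuccPredArch
  refine ⟨fun k => e.symm k, fun _ _ h => e.symm.strictMono h, Set.ext fun x => ⟨?_, ?_⟩⟩
  · rintro ⟨k, rfl⟩
    exact (e.symm k).2
  · intro hx
    exact ⟨e ⟨x, hx⟩, by simp⟩

def IsCell (D : Set (ℤ × ℤ)) (C : Set ℤ) : Prop :=
  (∃ S : Finset ℤ, IsFiniteCell D S ∧ (S : Set ℤ) = C) ∨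
    ∃ f : ℤ → ℤ, IsInfiniteCell D f ∧ Set.range f = C

lemma isCell_iff {D : Set (ℤ × ℤ)} {C : Set ℤ} : IsCell D C ↔ IsCellSet D C ∧ C.Nonempty := by
  constructor
  · rintro (⟨S, hS, rfl⟩ | ⟨f, hf, rfl⟩)
    · exact ⟨hS.isCellSet, Finset.coe_nonempty.mpr hS.1⟩
    · exact ⟨hf.isCellSet, Set.range_nonempty f⟩
  · rintro ⟨hC, hne⟩
    by_cases habove : BddAbove C
    · have hfin : C.Finite := (hC.bddAbove_iff.mp habove).finite_of_bddAbove habove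
      obtain ⟨S, rfl⟩ : ∃ S : Finset ℤ, (S : Set ℤ) = C := ⟨hfin.toFinset, hfin.coe_toFinset⟩
      exact .inl ⟨S, isFiniteCell_of_isCellSet hC (Finset.coe_nonempty.mp hne), rfl⟩
    · obtain ⟨f, hf, rfl⟩ :=
        exists_strictMono_range_eq hne (mt hC.bddAbove_iff.mpr habove) habove
      exact .inr ⟨f, isInfiniteCell_of_isCellSet hf hC, rfl⟩

theorem mem_mutation_iff {U D : Set (ℤ × ℤ)} {p : ℤ × ℤ} :
    p ∈ mutation U D ↔ p ∈ D ∨ ∃ C, IsCell D C ∧ IsInteriorPair C p.1 p.2 ∧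
      ordPair (nxt C p.1) (nxt C p.2) ∈ U := by
  constructor
  · rintro ((hp | ⟨S, hS, α, β, hαβ, hint, rfl⟩) | ⟨f, hf, k, l, hkl, hU, rfl⟩)
    · exact .inl hp
    · have hC := hS.isCellSet.bddAbove_iff
      have hint := finiteInterior_iff.mp hint
      rw [cellPred_eq_prv hS.1, cellPred_eq_prv hS.1]
      refine .inr ⟨S, .inl ⟨S, hS, rfl⟩, hint.ordPair_prv hC, ?_⟩
      rw [ordPair_apply_ordPair, nxt_prv hC hint.1, nxt_prv hC hint.2.1, ordPair_of_le hint.lt.le]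
      exact hαβ
    · refine .inr ⟨_, .inr ⟨f, hf, rfl⟩, (isInteriorPair_range_iff hf.1).mpr (by omega), ?_⟩
      rw [nxt_range hf.1, nxt_range hf.1, sub_add_cancel, sub_add_cancel,
        ordPair_of_le (hf.1.monotone (by omega))]
      exact hU
  · obtain ⟨x, y⟩ := p
    rintro (hp | ⟨C, ⟨S, hS, rfl⟩ | ⟨f, hf, rfl⟩, hint, hU⟩)
    · exact .inl (.inl hp)
    · have hC := hS.isCellSet.bddAbove_iff
      dsimp only at hint hU
      refine .inl (.inr ⟨S, hS, (ordPair (nxt S x) (nxt S y)).1, (ordPair (nxt S x) (nxt S y)).2,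
        hU, finiteInterior_iff.mpr (hint.ordPair_nxt hC), ?_⟩)
      rw [cellPred_eq_prv hS.1, cellPred_eq_prv hS.1, ordPair_apply_ordPair, prv_nxt hC hint.1,
        prv_nxt hC hint.2.1, ordPair_of_le hint.lt.le]
    · obtain ⟨k, rfl⟩ := hint.1
      obtain ⟨l, rfl⟩ := hint.2.1
      have hkl := (isInteriorPair_range_iff hf.1).mp hint
      rw [nxt_range hf.1, nxt_range hf.1, ordPair_of_le (hf.1.monotone (by omega))] at hU
      exact .inr ⟨f, hf, k + 1, l + 1, by omega, hU, by simp⟩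

lemma mem_mutation_of_nxt {U D : Set (ℤ × ℤ)} {C : Set ℤ} (hC : IsCell D C) {x y : ℤ}
    (hx : x ∈ C) (hy : y ∈ C) (hxy : x < y) (harc : IsArc x y)
    (hU : IsArc (ordPair (nxt C x) (nxt C y)).1 (ordPair (nxt C x) (nxt C y)).2 →
      ordPair (nxt C x) (nxt C y) ∈ U) : (x, y) ∈ mutation U D := by
  have hC' := (isCell_iff.mp hC).1
  by_cases hint : IsInteriorPair C x y
  · exact mem_mutation_iff.mpr
      (.inr ⟨C, hC, hint, hU (hint.ordPair_nxt hC'.bddAbove_iff).isArc⟩)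
  · obtain he | hd := hC'.side x hx y hy hxy hint
    · unfold IsEdge at he
      unfold IsArc at harc
      omega
    · exact mem_mutation_iff.mpr (.inl hd)

/-! ### The Ptolemy condition -/

lemma left_eq_ordPair_fst_or_snd (x y : ℤ) : x = (ordPair x y).1 ∨ x = (ordPair x y).2 := by
  simp only [ordPair]
  omega

lemma right_eq_ordPair_fst_or_snd (x y : ℤ) : y = (ordPair x y).1 ∨ y = (ordPair x y).2 := by
  rw [ordPair_comm]
  exact left_eq_ordPair_fst_or_snd y x

lemma IsPtolemy.ordPair_mem_of_cross {U : Set (ℤ × ℤ)} (hU : IsPtolemy U) {p q : ℤ × ℤ} (hp : p ∈ U)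
    (hq : q ∈ U) (hpq : Cross p q) {x y : ℤ} (hx : x = p.1 ∨ x = p.2) (hy : y = q.1 ∨ y = q.2)
    (harc : IsArc (ordPair x y).1 (ordPair x y).2) : ordPair x y ∈ U := by
  obtain ⟨p₁, p₂⟩ := p
  obtain ⟨q₁, q₂⟩ := q
  dsimp only at hx hy
  rcases hpq with ⟨h₁, h₂, h₃⟩ | ⟨h₁, h₂, h₃⟩
  · have hsides := hU.2.1 p₁ q₁ p₂ q₂ hp hq h₁ h₂ h₃
    rcases hx with rfl | rfl <;> rcases hy with rfl | rfl
    all_goals first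
      | rw [ordPair_of_le (by omega)] at harc ⊢; tauto
      | rw [ordPair_comm, ordPair_of_le (by omega)] at harc ⊢; tauto
  · have hsides := hU.2.1 q₁ p₁ q₂ p₂ hq hp h₁ h₂ h₃
    rcases hx with rfl | rfl <;> rcases hy with rfl | rfl
    all_goals first
      | rw [ordPair_of_le (by omega)] at harc ⊢; tauto
      | rw [ordPair_comm, ordPair_of_le (by omega)] at harc ⊢; tauto

lemma cross_ordPair_nxt {C : Set ℤ} (hC : BddAbove C ↔ BddBelow C) {a b c d : ℤ} (ha : a ∈ C)
    (hb : b ∈ C) (hc : c ∈ C) (hd : d ∈ C) (hab : a < b) (hbc : b < c) (hcd : c < d) :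
    Cross (ordPair (nxt C a) (nxt C c)) (ordPair (nxt C b) (nxt C d)) := by
  obtain ⟨⟨-, ha₁⟩, ha₂⟩ := isLeast_nxt ⟨b, hb, hab⟩
  obtain ⟨⟨-, hb₁⟩, hb₂⟩ := isLeast_nxt ⟨c, hc, hbc⟩
  obtain ⟨⟨-, hc₁⟩, hc₂⟩ := isLeast_nxt ⟨d, hd, hcd⟩
  have := ha₂ ⟨hb, hab⟩
  have := hb₂ ⟨hc, hbc⟩
  have := hc₂ ⟨hd, hcd⟩
  have hd₁ : d < nxt C d ∨ nxt C d ≤ a := by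
    by_cases habove : ∃ w ∈ C, d < w
    · exact .inl (isLeast_nxt habove).1.2
    · push Not at habove
      obtain ⟨m, hm⟩ := exists_isLeast_of_isGreatest hC ⟨hd, habove⟩
      rw [nxt_of_isGreatest ⟨hd, habove⟩ hm]
      exact .inr (hm.2 ha)
  simp only [Cross, ordPair]
  omega

lemma exists_cell_of_cross {U D : Set (ℤ × ℤ)} (hD : D ⊆ core U) {a b c d : ℤ}
    (hac : (a, c) ∈ mutation U D) (hbd : (b, d) ∈ mutation U D) (hab : a < b) (hbc : b < c)
    (hcd : c < d) : ∃ C, IsCell D C ∧ a ∈ C ∧ b ∈ C ∧ c ∈ C ∧ d ∈ C ∧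
      ordPair (nxt C a) (nxt C c) ∈ U ∧ ordPair (nxt C b) (nxt C d) ∈ U := by
  have hD' := nonCrossing_of_subset_core hD
  rcases mem_mutation_iff.mp hac with hacD | ⟨S, hS, hintS, hSU⟩ <;>
    rcases mem_mutation_iff.mp hbd with hbdD | ⟨T, hT, hintT, hTU⟩
  · exact (hD' _ hacD _ hbdD (.inl ⟨hab, hbc, hcd⟩)).elim
  · have := (isCell_iff.mp hT).1.subset_Icc hD' hacD hintT.1 hab hbc hintT.2.1
    dsimp only at this
    omega
  · have := (isCell_iff.mp hS).1.subset_Icc hD' hbdD hintS.2.1 hbc hcd hintS.1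
    dsimp only at this
    omega
  · have hS' := (isCell_iff.mp hS).1
    have hT' := (isCell_iff.mp hT).1
    obtain ⟨haS, hcS, -⟩ := hintS
    obtain ⟨hbT, hdT, -⟩ := hintT
    dsimp only at haS hcS hbT hdT hSU hTU
    have hbS := hS'.mem_of_mem_Ioo hD' hT' haS hcS hab hbc hbT hdT (.inr hcd)
    have hcT := hT'.mem_of_mem_Ioo hD' hS' hbT hdT hbc hcd hcS haS (.inl hab)
    have hdS := hS'.mem_of_lt_of_lt hD' hT' haS hcS hab hbc hbT hdT (.inr hcd)
    obtain rfl := hS'.eq_of_three hD' hT' hbc hcd ⟨hbS, hbT⟩ ⟨hcS, hcT⟩ ⟨hdS, hdT⟩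
    exact ⟨S, hS, haS, hbS, hcS, hdS, hSU, hTU⟩

lemma mutation_ptolemy {U D : Set (ℤ × ℤ)} (hU : IsPtolemy U) (hD : D ⊆ core U) :
    ∀ a b c d : ℤ, (a, c) ∈ mutation U D → (b, d) ∈ mutation U D → a < b → b < c → c < d →
      (IsArc a b → (a, b) ∈ mutation U D) ∧ (IsArc b c → (b, c) ∈ mutation U D) ∧
      (IsArc c d → (c, d) ∈ mutation U D) ∧ (IsArc a d → (a, d) ∈ mutation U D) := by
  intro a b c d hac hbd hab hbc hcd
  obtain ⟨C, hC, ha, hb, hc, hd, hacU, hbdU⟩ := exists_cell_of_cross hD hac hbd hab hbc hcd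
  have hcross := cross_ordPair_nxt (isCell_iff.mp hC).1.bddAbove_iff ha hb hc hd hab hbc hcd
  have hside := fun {x y} => hU.ordPair_mem_of_cross (x := x) (y := y) hacU hbdU hcross
  refine ⟨fun h => mem_mutation_of_nxt hC ha hb hab h ?_,
    fun h => mem_mutation_of_nxt hC hb hc hbc h ?_, fun h => mem_mutation_of_nxt hC hc hd hcd h ?_,
    fun h => mem_mutation_of_nxt hC ha hd (by omega) h ?_⟩
  · exact hside (left_eq_ordPair_fst_or_snd _ _) (left_eq_ordPair_fst_or_snd _ _)
  · rw [ordPair_comm (nxt C b)]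
    exact hside (right_eq_ordPair_fst_or_snd _ _) (left_eq_ordPair_fst_or_snd _ _)
  · exact hside (right_eq_ordPair_fst_or_snd _ _) (right_eq_ordPair_fst_or_snd _ _)
  · exact hside (left_eq_ordPair_fst_or_snd _ _) (right_eq_ordPair_fst_or_snd _ _)

lemma mutation_isArc {U D : Set (ℤ × ℤ)} (hU : IsPtolemy U) (hD : D ⊆ core U) :
    ∀ p ∈ mutation U D, IsArc p.1 p.2 := by
  intro p hp
  rcases mem_mutation_iff.mp hp with hpD | ⟨C, -, hint, -⟩
  · exact hU.1 p (hD hpD).1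
  · exact hint.isArc

/-! ### The fountain condition -/

lemma exists_lt_of_infinite_of_bddAbove {A : Set ℤ} (h : A.Infinite) (hb : BddAbove A) (N : ℤ) :
    ∃ x ∈ A, x < N := by
  by_contra! hN
  obtain ⟨K, hK⟩ := hb
  exact h ((Set.finite_Icc N K).subset fun x hx => ⟨hN x hx, hK hx⟩)

lemma exists_gt_of_infinite_of_bddBelow {A : Set ℤ} (h : A.Infinite) (hb : BddBelow A) (N : ℤ) :
    ∃ x ∈ A, N < x := by
  by_contra! hN
  obtain ⟨K, hK⟩ := hb
  exact h ((Set.finite_Icc K N).subset fun x hx => ⟨hK hx, hN x hx⟩)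

lemma exists_infinite_inter_of_subset_biUnion {α ι : Type*} {A : Set α} {I : Set ι}
    {F : ι → Set α} (hA : A.Infinite) (hI : I.Finite) (hsub : A ⊆ ⋃ i ∈ I, F i) :
    ∃ i ∈ I, (A ∩ F i).Infinite := by
  by_contra! h
  refine hA ((hI.biUnion fun i hi => h i hi).subset fun x hx => ?_)
  obtain ⟨i, hi, hxi⟩ := Set.mem_iUnion₂.mp (hsub hx)
  exact Set.mem_iUnion₂.mpr ⟨i, hi, hx, hxi⟩

section FountainOfD

variable {D : Set (ℤ × ℤ)} (hD : NonCrossing D) (hDarc : ∀ p ∈ D, IsArc p.1 p.2)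
include hDarc

lemma bddAbove_left_of_isArc (n : ℤ) : BddAbove {m | (m, n) ∈ D} :=
  ⟨n, fun m hm => by have := hDarc _ hm; unfold IsArc at this; dsimp only at this; omega⟩

lemma bddBelow_right_of_isArc (n : ℤ) : BddBelow {p | (n, p) ∈ D} :=
  ⟨n, fun p hp => by have := hDarc _ hp; unfold IsArc at this; dsimp only at this; omega⟩

lemma exists_cover_of_hasFountain (hF : HasFountain D) {m c : ℤ}
    (hchord : ∀ q ∈ D, ¬ Cross q (m, c)) : ∃ s t, (s, t) ∈ D ∧ s ≤ m ∧ c ≤ t := by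
  obtain ⟨n₀, hL, hR⟩ := hF
  obtain ⟨x, hx, hxm⟩ := exists_lt_of_infinite_of_bddAbove hL (bddAbove_left_of_isArc hDarc n₀) m
  obtain ⟨y, hy, hcy⟩ := exists_gt_of_infinite_of_bddBelow hR (bddBelow_right_of_isArc hDarc n₀) c
  by_cases hcn : c ≤ n₀
  · exact ⟨x, n₀, hx, hxm.le, hcn⟩
  by_cases hnm : n₀ ≤ m
  · exact ⟨n₀, y, hy, hnm, hcy.le⟩
  exact (hchord _ hx (.inl ⟨hxm, by omega, by omega⟩)).elim

include hD

lemma eq_of_isRightFountain {n₀ n : ℤ} (hL : IsLeftFountain D n₀) (hR : IsRightFountain D n₀)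
    (hn : IsRightFountain D n) : n = n₀ := by
  by_contra hne
  rcases lt_or_gt_of_ne hne with h | h
  · obtain ⟨m, hm, hmn⟩ := exists_lt_of_infinite_of_bddAbove hL (bddAbove_left_of_isArc hDarc n₀) n
    obtain ⟨p, hp, hnp⟩ := exists_gt_of_infinite_of_bddBelow hn (bddBelow_right_of_isArc hDarc n) n₀
    exact hD _ hm _ hp (.inl ⟨hmn, h, hnp⟩)
  · obtain ⟨p, hp, hnp⟩ := exists_gt_of_infinite_of_bddBelow hR (bddBelow_right_of_isArc hDarc n₀) n
    obtain ⟨q, hq, hpq⟩ := exists_gt_of_infinite_of_bddBelow hn (bddBelow_right_of_isArc hDarc n) p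
    exact hD _ hp _ hq (.inl ⟨h, hnp, hpq⟩)

end FountainOfD

/-- The vertices lying, for every arc of `D`, on the same side as the chord `(m, c)`: for a chord
crossing no arc of `D`, the vertex set of the `D`-cell containing it. -/
def face (D : Set (ℤ × ℤ)) (m c : ℤ) : Set ℤ :=
  {v | ∀ s t, (s, t) ∈ D →
    (s ≤ m ∧ c ≤ t → s ≤ v ∧ v ≤ t) ∧ (¬ (s ≤ m ∧ c ≤ t) → v ≤ s ∨ t ≤ v)}

section Face

variable {D : Set (ℤ × ℤ)} {m c : ℤ}

lemma left_mem_face (hmc : m < c) (hchord : ∀ q ∈ D, ¬ Cross q (m, c)) : m ∈ face D m c := by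
  intro s t hst
  have := hchord _ hst
  simp only [Cross] at this
  omega

lemma right_mem_face (hmc : m < c) (hchord : ∀ q ∈ D, ¬ Cross q (m, c)) : c ∈ face D m c := by
  intro s t hst
  have := hchord _ hst
  simp only [Cross] at this
  omega

lemma face_subset_Icc {s t : ℤ} (hst : (s, t) ∈ D) (hcov : s ≤ m ∧ c ≤ t) :
    face D m c ⊆ Set.Icc s t :=
  fun _ hv => (hv s t hst).1 hcov

lemma exists_arc_of_not_mem_face {x y z : ℤ} (hx : x ∈ face D m c) (hy : y ∈ face D m c)
    (hxz : x < z) (hzy : z < y) (hz : z ∉ face D m c) :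
    ∃ s t, (s, t) ∈ D ∧ x ≤ s ∧ s < z ∧ z < t ∧ t ≤ y := by
  simp only [face, Set.mem_ofPred_eq, not_forall] at hz
  obtain ⟨s, t, hst, hz⟩ := hz
  have := hx s t hst
  have := hy s t hst
  exact ⟨s, t, hst, by omega⟩

variable (hD : NonCrossing D)
include hD

lemma face_side_of_consecutive {x y : ℤ} (hx : x ∈ face D m c) (hy : y ∈ face D m c)
    (hxy : x < y) (hcons : ∀ u ∈ face D m c, ¬ (x < u ∧ u < y)) : IsEdge x y ∨ (x, y) ∈ D := by
  by_cases hedge : y = x + 1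
  · exact .inl hedge
  obtain ⟨s₀, t₀, hst₀, h₀⟩ := exists_arc_of_not_mem_face hx hy (lt_add_one x) (by omega)
    fun h => hcons _ h ⟨lt_add_one x, by omega⟩
  obtain rfl : x = s₀ := by omega
  -- the longest arc of `D` from `x` inside `(x, y]` ends at `y`
  obtain ⟨t, ⟨htD, hxt, hty⟩, htmax⟩ := Int.exists_greatest_of_bdd
    (P := fun t => (x, t) ∈ D ∧ x + 1 < t ∧ t ≤ y) ⟨y, fun _ h => h.2.2⟩ ⟨t₀, hst₀, by omega⟩
  rcases hty.lt_or_eq with hty | rfl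
  · obtain ⟨s', t', hst', h'⟩ := exists_arc_of_not_mem_face hx hy (by omega) hty
      fun h => hcons t h ⟨by omega, hty⟩
    rcases h'.1.lt_or_eq with hs' | rfl
    · exact (hD _ htD _ hst' (.inl ⟨hs', h'.2.1, h'.2.2.1⟩)).elim
    · have := htmax t' ⟨hst', by omega, h'.2.2.2⟩
      omega
  · exact .inr htD

lemma exists_cover_mem_face (hcov : ∃ s t, (s, t) ∈ D ∧ s ≤ m ∧ c ≤ t) (hmc : m < c) :
    ∃ s t, (s, t) ∈ D ∧ s ≤ m ∧ c ≤ t ∧ s ∈ face D m c ∧ t ∈ face D m c := by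
  obtain ⟨s₀, t₀, h₀⟩ := hcov
  obtain ⟨s, ⟨t₁, ht₁, hsm, hct₁⟩, hsmax⟩ := Int.exists_greatest_of_bdd
    (P := fun s => ∃ t, (s, t) ∈ D ∧ s ≤ m ∧ c ≤ t) ⟨m, fun _ ⟨_, _, h, _⟩ => h⟩ ⟨s₀, t₀, h₀⟩
  obtain ⟨t, ⟨hst, hct⟩, htmin⟩ := Int.exists_least_of_bdd
    (P := fun t => (s, t) ∈ D ∧ c ≤ t) ⟨c, fun _ h => h.2⟩ ⟨t₁, ht₁, hct₁⟩
  have hmem : ∀ s' t', (s', t') ∈ D → (s' ≤ m → c ≤ t' → s' ≤ s) ∧ (s' = s → c ≤ t' → t ≤ t') ∧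
      ¬ Cross (s, t) (s', t') := fun s' t' h' =>
    ⟨fun h₁ h₂ => hsmax s' ⟨t', h', h₁, h₂⟩, by rintro rfl h₂; exact htmin t' ⟨h', h₂⟩,
      hD _ hst _ h'⟩
  refine ⟨s, t, hst, hsm, hct, fun s' t' h' => ?_, fun s' t' h' => ?_⟩ <;>
  · have := hmem s' t' h'
    simp only [Cross] at this
    omega

lemma not_bddBelow_face (hLF : LocallyFinite D) (hchord : ∀ q ∈ D, ¬ Cross q (m, c))
    (hunc : ∀ s t, (s, t) ∈ D → ¬ (s ≤ m ∧ c ≤ t)) : ¬ BddBelow (face D m c) := by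
  rw [not_bddBelow_iff]
  intro N
  set N' := min N m - 1
  have hbelow : ∀ s t, (s, t) ∈ D → s < N' → N' < t → t ≤ m := fun s t hst h₁ h₂ => by
    have := hunc s t hst
    have := hchord _ hst
    simp only [Cross] at this
    omega
  by_cases hA : ∃ s t, (s, t) ∈ D ∧ s < N' ∧ N' < t
  · have hfin : {s | ∃ t, (s, t) ∈ D ∧ s < N' ∧ N' < t}.Finite :=
      ((Set.finite_Icc N' m).biUnion fun t _ => (hLF t).subset fun _ hs => .inl hs).subset
        fun s ⟨t, hst, h₁, h₂⟩ => Set.mem_iUnion₂.mpr ⟨t, ⟨h₂.le, hbelow s t hst h₁ h₂⟩, hst⟩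
    obtain ⟨s₀, t₀, h₀⟩ := hA
    -- the left end of the outermost arc over `N'`
    obtain ⟨s, ⟨t, hst, hsN, hNt⟩, hsmin⟩ := Int.exists_least_of_bdd
      (P := fun s => ∃ t, (s, t) ∈ D ∧ s < N' ∧ N' < t) hfin.bddBelow ⟨s₀, t₀, h₀⟩
    refine ⟨s, fun s' t' hst' => ⟨fun h => absurd h (hunc s' t' hst'), fun _ => ?_⟩, by omega⟩
    have := fun h₁ h₂ => hsmin s' ⟨t', hst', h₁, h₂⟩
    have := hD _ hst' _ hst
    simp only [Cross] at this
    omega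
  · push Not at hA
    refine ⟨N', fun s t hst => ⟨fun h => absurd h (hunc s t hst), fun _ => ?_⟩, by omega⟩
    by_contra! h
    exact absurd (hA s t hst h.1) h.2.not_ge

lemma not_bddAbove_face (hLF : LocallyFinite D) (hchord : ∀ q ∈ D, ¬ Cross q (m, c))
    (hunc : ∀ s t, (s, t) ∈ D → ¬ (s ≤ m ∧ c ≤ t)) : ¬ BddAbove (face D m c) := by
  rw [not_bddAbove_iff]
  intro N
  set N' := max N c + 1
  have habove : ∀ s t, (s, t) ∈ D → s < N' → N' < t → c ≤ s := fun s t hst h₁ h₂ => by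
    have := hunc s t hst
    have := hchord _ hst
    simp only [Cross] at this
    omega
  by_cases hB : ∃ s t, (s, t) ∈ D ∧ s < N' ∧ N' < t
  · have hfin : {t | ∃ s, (s, t) ∈ D ∧ s < N' ∧ N' < t}.Finite :=
      ((Set.finite_Icc c N').biUnion fun s _ => (hLF s).subset fun _ ht => .inr ht).subset
        fun t ⟨s, hst, h₁, h₂⟩ => Set.mem_iUnion₂.mpr ⟨s, ⟨habove s t hst h₁ h₂, h₁.le⟩, hst⟩
    obtain ⟨s₀, t₀, h₀⟩ := hB
    -- the right end of the outermost arc over `N'`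
    obtain ⟨t, ⟨s, hst, hsN, hNt⟩, htmax⟩ := Int.exists_greatest_of_bdd
      (P := fun t => ∃ s, (s, t) ∈ D ∧ s < N' ∧ N' < t) hfin.bddAbove ⟨t₀, s₀, h₀⟩
    refine ⟨t, fun s' t' hst' => ⟨fun h => absurd h (hunc s' t' hst'), fun _ => ?_⟩, by omega⟩
    have := fun h₁ h₂ => htmax t' ⟨s', hst', h₁, h₂⟩
    have := hD _ hst _ hst'
    simp only [Cross] at this
    omega
  · push Not at hB
    refine ⟨N', fun s t hst => ⟨fun h => absurd h (hunc s t hst), fun _ => ?_⟩, by omega⟩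
    by_contra! h
    exact absurd (hB s t hst h.1) h.2.not_ge

end Face

lemma isCellSet_face {D : Set (ℤ × ℤ)} (hD : NonCrossing D) (hDarc : ∀ p ∈ D, IsArc p.1 p.2)
    (hDf : LocallyFinite D ∨ HasFountain D) {m c : ℤ} (hmc : m < c)
    (hchord : ∀ q ∈ D, ¬ Cross q (m, c)) : IsCellSet D (face D m c) := by
  have hcov : (∃ s t, (s, t) ∈ D ∧ s ≤ m ∧ c ≤ t) ∨
      (¬ BddBelow (face D m c) ∧ ¬ BddAbove (face D m c)) := by
    by_cases h : ∃ s t, (s, t) ∈ D ∧ s ≤ m ∧ c ≤ t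
    · exact .inl h
    have hunc : ∀ s t, (s, t) ∈ D → ¬ (s ≤ m ∧ c ≤ t) := fun s t hst hcov => h ⟨s, t, hst, hcov⟩
    rcases hDf with hLF | hF
    · exact .inr ⟨not_bddBelow_face hD hLF hchord hunc, not_bddAbove_face hD hLF hchord hunc⟩
    · exact absurd (exists_cover_of_hasFountain hDarc hF hchord) h
  refine ⟨fun x hx y hy hxy hint => ?_, fun x y ⟨hx, hy, ⟨u, hu, hxu, huy⟩, w, hw, hw'⟩ hxy => ?_,
    ?_⟩
  · by_cases hbetween : ∃ u ∈ face D m c, x < u ∧ u < y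
    · have hout : ∀ w ∈ face D m c, x ≤ w ∧ w ≤ y := fun w hw => by
        by_contra h
        exact hint ⟨hx, hy, hbetween, w, hw, by omega⟩
      rcases hcov with hcov | ⟨hbelow, -⟩
      · obtain ⟨s, t, hst, hsm, hct, hs, ht⟩ := exists_cover_mem_face hD hcov hmc
        have hI : face D m c ⊆ Set.Icc s t := face_subset_Icc hst ⟨hsm, hct⟩
        obtain rfl : x = s := le_antisymm (hout s hs).1 (hI hx).1
        obtain rfl : y = t := le_antisymm (hI hy).2 (hout t ht).2
        exact .inr hst
      · exact absurd ⟨x, fun w hw => (hout w hw).1⟩ hbelow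
    · push Not at hbetween
      exact face_side_of_consecutive hD hx hy hxy fun u hu h => (hbetween u hu h.1).not_gt h.2
  · have := hu x y hxy
    have := hw x y hxy
    omega
  · rcases hcov with ⟨s, t, hst, hcov⟩ | ⟨hbelow, habove⟩
    · exact iff_of_true ⟨t, fun _ hv => (face_subset_Icc hst hcov hv).2⟩
        ⟨s, fun _ hv => (face_subset_Icc hst hcov hv).1⟩
    · exact iff_of_false habove hbelow

section Side

variable {D : Set (ℤ × ℤ)} {m n c : ℤ} (hmn : m < n) (hside : IsEdge n c ∨ (n, c) ∈ D)
include hmn hside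

lemma mem_face_of_side (hD : NonCrossing D) (hchord : ∀ q ∈ D, ¬ Cross q (m, c))
    (hnc : n < c) (houter : ∀ z < n, (z, c) ∉ D) : n ∈ face D m c := by
  intro s t hst
  have h₁ := hchord _ hst
  have h₂ : t = c → n ≤ s := fun htc => by
    by_contra! h
    exact houter s h (htc ▸ hst)
  simp only [Cross] at h₁
  rcases hside with hedge | hncD
  · unfold IsEdge at hedge
    omega
  · have h₃ := hD _ hncD _ hst
    simp only [Cross] at h₃
    omega

lemma not_mem_face_of_side {u : ℤ} (hu : u ∈ face D m c) : ¬ (n < u ∧ u < c) := by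
  rcases hside with hedge | hncD
  · unfold IsEdge at hedge
    omega
  · have := hu n c hncD
    omega

end Side

lemma exists_mutation_arc_below {U D : Set (ℤ × ℤ)} (hU : IsPtolemy U) (hD : D ⊆ core U)
    (hDf : LocallyFinite D ∨ HasFountain D) {m n c : ℤ} (hmn : m < n) (hnc : n < c)
    (hside : IsEdge n c ∨ (n, c) ∈ D) (houter : ∀ z < n, (z, c) ∉ D) (hmc : (m, c) ∈ U)
    (hbad : ∀ w, c ≤ w → (m, w) ∉ D) : ∃ v < m, (v, n) ∈ mutation U D := by
  have hD' := nonCrossing_of_subset_core hD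
  have hchord : ∀ q ∈ D, ¬ Cross q (m, c) := fun q hq => (hD hq).2 _ hmc
  have hF := isCellSet_face hD' (fun p hp => hU.1 p (hD hp).1) hDf (hmn.trans hnc) hchord
  have hmF := left_mem_face (hmn.trans hnc) hchord
  have hcF := right_mem_face (hmn.trans hnc) hchord
  have hnF := mem_face_of_side hmn hside hD' hchord hnc houter
  -- if `m` were the first vertex of its cell, the arc from it to the last vertex would be in `D`
  have hbelow : ∃ w ∈ face D m c, w < m := by
    by_contra! h
    obtain ⟨M, hM⟩ := exists_isGreatest_of_isLeast hF.bddAbove_iff ⟨hmF, h⟩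
    have harc := hU.1 _ hmc
    have := hM.2 hcF
    unfold IsArc at harc
    exact hbad M this (hF.mem_of_isLeast_of_isGreatest ⟨hmF, h⟩ hM (by omega))
  obtain ⟨⟨hv, hvm⟩, -⟩ := isGreatest_prv hbelow
  have hnxt : nxt (face D m c) n = c := by
    refine (isLeast_nxt ⟨c, hcF, hnc⟩).unique ⟨⟨hcF, hnc⟩, fun u ⟨hu, hnu⟩ => ?_⟩
    by_contra! h
    exact not_mem_face_of_side hmn hside hu ⟨hnu, h⟩
  refine ⟨prv (face D m c) m, hvm, mem_mutation_iff.mpr (.inr ⟨_, isCell_iff.mpr ⟨hF, m, hmF⟩,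
    ⟨hv, hnF, ⟨m, hmF, hvm, hmn⟩, c, hcF, .inr hnc⟩, ?_⟩)⟩
  rw [nxt_prv hF.bddAbove_iff hmF, hnxt, ordPair_of_le (hmn.trans hnc).le]
  exact hmc

lemma isLeftFountain_mutation_of_side {U D : Set (ℤ × ℤ)} (hU : IsPtolemy U) (hD : D ⊆ core U)
    (hDf : LocallyFinite D ∨ HasFountain D) {n c : ℤ} (hnc : n < c)
    (hside : IsEdge n c ∨ (n, c) ∈ D) (houter : ∀ z < n, (z, c) ∉ D) (hc : IsLeftFountain U c) :
    IsLeftFountain (mutation U D) n := by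
  have hbad : {m | (m, c) ∈ U ∧ m < n ∧ ∃ w, c ≤ w ∧ (m, w) ∈ D}.Subsingleton := by
    rintro m₁ ⟨hm₁, hm₁n, w₁, hcw₁, hw₁⟩ m₂ ⟨hm₂, hm₂n, w₂, hcw₂, hw₂⟩
    have h₁ : w₁ ≠ c := fun h => houter m₁ hm₁n (h ▸ hw₁)
    have h₂ : w₂ ≠ c := fun h => houter m₂ hm₂n (h ▸ hw₂)
    by_contra hne
    rcases lt_or_gt_of_ne hne with h | h
    · exact (hD hw₂).2 _ hm₁ (.inr ⟨h, by omega, by omega⟩)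
    · exact (hD hw₁).2 _ hm₂ (.inr ⟨h, by omega, by omega⟩)
  have hgood : {m | (m, c) ∈ U ∧ m < n ∧ ∀ w, c ≤ w → (m, w) ∉ D}.Infinite := by
    refine fun hfin => hc ((((Set.finite_Icc n c).union hbad.finite).union hfin).subset
      fun m hm => ?_)
    have harc := hU.1 _ hm
    unfold IsArc at harc
    by_cases hmn : n ≤ m
    · exact .inl (.inl ⟨hmn, by dsimp only at harc; omega⟩)
    by_cases hb : ∃ w, c ≤ w ∧ (m, w) ∈ D
    · exact .inl (.inr ⟨hm, by omega, hb⟩)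
    · push Not at hb
      exact .inr ⟨hm, by omega, hb⟩
  intro hfin
  refine hgood ((hfin.biUnion fun v _ => Set.finite_Ioo v n).subset fun m ⟨hm, hmn, hb⟩ => ?_)
  obtain ⟨v, hvm, hv⟩ := exists_mutation_arc_below hU hD hDf hmn hnc hside houter hm hb
  exact Set.mem_iUnion₂.mpr ⟨v, hv, hvm, hmn⟩

lemma exists_side_of_mem_mutation {U D : Set (ℤ × ℤ)} {n p : ℤ} (hp : (n, p) ∈ mutation U D)
    (hpD : (n, p) ∉ D) : ∃ C c, IsCellSet D C ∧ n ∈ C ∧ c ∈ C ∧ p ∈ C ∧ n < c ∧ c < p ∧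
      (IsEdge n c ∨ (n, c) ∈ D) ∧ ((∃ b, p < b ∧ (c, b) ∈ U) ∨ ∃ m₀ < c, (m₀, p) ∈ D) := by
  obtain hpD' | ⟨C, hC, ⟨hn, hp', ⟨u, hu, hnu, hup⟩, -⟩, hU⟩ := mem_mutation_iff.mp hp
  · exact absurd hpD' hpD
  have hC' := (isCell_iff.mp hC).1
  dsimp only at hn hp' hnu hup hU
  obtain ⟨⟨hc, hnc⟩, hcmin⟩ := isLeast_nxt ⟨p, hp', hnu.trans hup⟩
  have hcu := hcmin ⟨hu, hnu⟩
  have hside := hC'.side n hn _ hc hnc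
    fun ⟨_, _, ⟨w, hw, hnw, hwc⟩, _⟩ => (hcmin ⟨hw, hnw⟩).not_gt hwc
  refine ⟨C, nxt C n, hC', hn, hc, hp', hnc, by omega, hside, ?_⟩
  by_cases habove : ∃ w ∈ C, p < w
  · obtain ⟨⟨-, hpb⟩, -⟩ := isLeast_nxt habove
    rw [ordPair_of_le (by omega)] at hU
    exact .inl ⟨_, hpb, hU⟩
  · push Not at habove
    obtain ⟨m₀, hm₀⟩ := exists_isLeast_of_isGreatest hC'.bddAbove_iff ⟨hp', habove⟩
    have := hm₀.2 hn
    exact .inr ⟨m₀, by omega, hC'.mem_of_isLeast_of_isGreatest hm₀ ⟨hp', habove⟩ (by omega)⟩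

lemma exists_side_isLeftFountain {U D : Set (ℤ × ℤ)} (hU : IsPtolemy U) (hD : D ⊆ core U)
    {n : ℤ} (hn : IsRightFountain (mutation U D) n) (hfin : {p | (n, p) ∈ D}.Finite) :
    ∃ c, n < c ∧ (IsEdge n c ∨ (n, c) ∈ D) ∧ (∀ z < n, (z, c) ∉ D) ∧ IsLeftFountain U c := by
  have hD' := nonCrossing_of_subset_core hD
  set Q : ℤ → Set ℤ := fun c => {p | ∃ C, IsCellSet D C ∧ n ∈ C ∧ c ∈ C ∧ p ∈ C ∧ c < p ∧
    ((∃ b, p < b ∧ (c, b) ∈ U) ∨ ∃ m₀ < c, (m₀, p) ∈ D)}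
  have hK : {c | n < c ∧ (IsEdge n c ∨ (n, c) ∈ D)}.Finite :=
    (hfin.insert (n + 1)).subset fun _ ⟨_, h⟩ => h
  obtain ⟨c, ⟨hnc, hside⟩, hQ⟩ := exists_infinite_inter_of_subset_biUnion (hn.sdiff hfin) hK
    (F := Q) fun p ⟨hp, hpD⟩ => by
      obtain ⟨C, c, hC, hnC, hcC, hpC, hnc, hcp, hside, hdata⟩ := exists_side_of_mem_mutation hp hpD
      exact Set.mem_iUnion₂.mpr ⟨c, ⟨hnc, hside⟩, C, hC, hnC, hcC, hpC, hcp, hdata⟩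
  replace hQ : (Q c).Infinite := hQ.mono Set.inter_subset_right
  refine ⟨c, hnc, hside, fun z hz hzc => ?_, hU.2.2 c (Set.infinite_of_not_bddAbove ?_)⟩
  · obtain ⟨p, C, hC, hnC, -, hpC, hcp, -⟩ := hQ.nonempty
    have := hC.subset_Icc hD' hzc hnC hz hnc hpC
    omega
  · -- far out, `Q c` can only contain last vertices of cells, and a cell cut off by the arc from
    -- its first to its last vertex contains no larger element of `Q c`
    rintro ⟨B, hB⟩
    have hQb : BddBelow (Q c) := ⟨c, fun p ⟨_, _, _, _, _, hcp, _⟩ => hcp.le⟩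
    obtain ⟨p₁, hp₁, hBp₁⟩ := exists_gt_of_infinite_of_bddBelow hQ hQb B
    obtain ⟨p₂, ⟨C₂, hC₂, -, hcC₂, hp₂C₂, -⟩, hp₁p₂⟩ :=
      exists_gt_of_infinite_of_bddBelow hQ hQb p₁
    obtain ⟨C₁, -, -, -, -, hcp₁, ⟨b, hpb, hb⟩ | ⟨m₀, hm₀c, hm₀p⟩⟩ := hp₁
    · have := hB hb
      omega
    · have := hC₂.subset_Icc hD' hm₀p hcC₂ hm₀c hcp₁ hp₂C₂
      omega

lemma isLeftFountain_mutation_of_isRightFountain {U D : Set (ℤ × ℤ)} (hU : IsPtolemy U)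
    (hD : D ⊆ core U) (hDf : LocallyFinite D ∨ HasFountain D) :
    ∀ n, IsRightFountain (mutation U D) n → IsLeftFountain (mutation U D) n := by
  intro n hn
  by_cases hfin : {p | (n, p) ∈ D}.Finite
  · obtain ⟨c, hnc, hside, houter, hc⟩ := exists_side_isLeftFountain hU hD hn hfin
    exact isLeftFountain_mutation_of_side hU hD hDf hnc hside houter hc
  · rcases hDf with hLF | ⟨n₀, hL, hR⟩
    · exact absurd ((hLF n).subset fun p hp => .inr hp) hfin
    · obtain rfl := eq_of_isRightFountain (nonCrossing_of_subset_core hD)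
        (fun p hp => hU.1 p (hD hp).1) hL hR hfin
      exact hL.mono fun m hm => .inl (.inl hm)

/-- if `U` is a Ptolemy diagram of the ∞-gon and `D ⊆ I(U)` is locally
finite or has a fountain, then the `D`-mutation of `U` is again a Ptolemy diagram. -/
theorem stmt19 (U D : Set (ℤ × ℤ)) (hU : IsPtolemy U) (hD : D ⊆ core U)
    (hDf : LocallyFinite D ∨ HasFountain D) :
    IsPtolemy (mutation U D) :=
  ⟨mutation_isArc hU hD, mutation_ptolemy hU hD,
    isLeftFountain_mutation_of_isRightFountain hU hD hDf⟩

end InfinityGonPtolemy
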